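/- arXiv:2202.07743 — 2 statements merged into one kernel-verified Lean document; each statement's English description precedes it below -/
import Mathlib

section
/- Let γ ∈ (0,1/2] and L ≥ 0, and let g, h : [0,∞) → ℝ satisfy: h(0) = 0, 0 ≤ h(u) ≤ L·u for all u ∈ [0,γ], the map u ↦ h(u)/u is non-increasing on (0,γ], g(u) ≤ h(u) for all u ∈ (0,γ], and g(u)/u ≤ h(γ)/γ for all u ≥ γ. Then for every sequence (v_n)_{n∈ℕ} of nonnegative real numbers which is summable with 0 < Σ_{n∈ℕ} v_n ≤ 1, the sequence (h(γ·v_n))_{n∈ℕ} is summable and g(Σ_{n∈ℕ} v_n) ≤ γ^{-1}·Σ_{n∈ℕ} h(γ·v_n). -/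
/-!
Write `S = ∑ vₙ`. Since `u ↦ h u / u` is non-increasing on `(0, γ]`, every `h (γ vₙ)` lies above
the chord `u ↦ (h (γ S) / (γ S)) u`, so summing gives `h (γ S) ≤ ∑ h (γ vₙ)`. The same
monotonicity, together with `g ≤ h` below `γ` and the slope bound on `g` above `γ`, gives
`g S ≤ S · h (γ S) / (γ S) = γ⁻¹ h (γ S)`.
-/

open Set

section SlopeAntitone

variable {h : ℝ → ℝ} {a : ℝ}

theorem div_mul_le_of_antitoneOn_div (hmono : AntitoneOn (fun u => h u / u) (Ioc 0 a))
    (h0 : 0 ≤ h 0) {u w : ℝ} (hu : 0 ≤ u) (huw : u ≤ w) (hwa : w ≤ a) :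
    h w / w * u ≤ h u := by
  rcases hu.eq_or_lt with rfl | hu
  · simpa using h0
  calc h w / w * u ≤ h u / u * u :=
        mul_le_mul_of_nonneg_right (hmono ⟨hu, huw.trans hwa⟩ ⟨hu.trans_le huw, hwa⟩ huw) hu.le
    _ = h u := div_mul_cancel₀ _ hu.ne'

theorem apply_tsum_le_tsum_of_antitoneOn_div {ι : Type*}
    (hmono : AntitoneOn (fun u => h u / u) (Ioc 0 a)) (h0 : 0 ≤ h 0)
    {x : ι → ℝ} (hx : ∀ i, 0 ≤ x i) (hxs : Summable x) (hhxs : Summable (fun i => h (x i)))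
    (hpos : 0 < ∑' i, x i) (hle : ∑' i, x i ≤ a) :
    h (∑' i, x i) ≤ ∑' i, h (x i) := by
  set T := ∑' i, x i
  calc h T = h T / T * T := (div_mul_cancel₀ _ hpos.ne').symm
    _ = ∑' i, h T / T * x i := tsum_mul_left.symm
    _ ≤ ∑' i, h (x i) :=
        (hxs.mul_left _).tsum_le_tsum
          (fun i => div_mul_le_of_antitoneOn_div hmono h0 (hx i)
            (hxs.le_tsum i fun j _ => hx j) hle) hhxs

end SlopeAntitone

theorem le_inv_mul_apply_mul_of_antitoneOn_div {g h : ℝ → ℝ} {γ S : ℝ}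
    (hγ : 0 < γ) (hγ1 : γ ≤ 1)
    (hmono : AntitoneOn (fun u => h u / u) (Ioc 0 γ))
    (hgh : ∀ u ∈ Ioc 0 γ, g u ≤ h u) (hslope : ∀ u, γ ≤ u → g u / u ≤ h γ / γ)
    (hS : 0 < S) (hS1 : S ≤ 1) :
    g S ≤ γ⁻¹ * h (γ * S) := by
  have hγS : 0 < γ * S := mul_pos hγ hS
  have hγSγ : γ * S ≤ γ := mul_le_of_le_one_right hγ.le hS1
  have hslopeS : g S ≤ h (γ * S) / (γ * S) * S := by
    rcases le_total S γ with hSγ | hγS'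
    · calc g S ≤ h S := hgh S ⟨hS, hSγ⟩
        _ = h S / S * S := (div_mul_cancel₀ _ hS.ne').symm
        _ ≤ h (γ * S) / (γ * S) * S := mul_le_mul_of_nonneg_right
            (hmono ⟨hγS, hγSγ⟩ ⟨hS, hSγ⟩ (mul_le_of_le_one_left hS.le hγ1)) hS.le
    · calc g S = g S / S * S := (div_mul_cancel₀ _ hS.ne').symm
        _ ≤ h γ / γ * S := mul_le_mul_of_nonneg_right (hslope S hγS') hS.le
        _ ≤ h (γ * S) / (γ * S) * S :=
            mul_le_mul_of_nonneg_right (hmono ⟨hγS, hγSγ⟩ ⟨hγ, le_rfl⟩ hγSγ) hS.le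
  calc g S ≤ h (γ * S) / (γ * S) * S := hslopeS
    _ = γ⁻¹ * h (γ * S) := by field_simp

theorem stmt0_general
    (γ L : ℝ) (hγ : γ ∈ Set.Ioc (0 : ℝ) (1 / 2))
    (g h : ℝ → ℝ)
    (hbound : ∀ u ∈ Set.Icc (0 : ℝ) γ, 0 ≤ h u ∧ h u ≤ L * u)
    (hmono : ∀ u v : ℝ, 0 < u → u ≤ v → v ≤ γ → h v / v ≤ h u / u)
    (hgh : ∀ u ∈ Set.Ioc (0 : ℝ) γ, g u ≤ h u)
    (hslope : ∀ u : ℝ, γ ≤ u → g u / u ≤ h γ / γ)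
    (v : ℕ → ℝ) (hv : ∀ n, 0 ≤ v n) (hsum : Summable v)
    (hpos : 0 < ∑' n, v n) (hle : (∑' n, v n) ≤ 1) :
    Summable (fun n => h (γ * v n)) ∧
      g (∑' n, v n) ≤ γ⁻¹ * ∑' n, h (γ * v n) := by
  have hγ0 : 0 < γ := hγ.1
  have hmono' : AntitoneOn (fun u => h u / u) (Ioc 0 γ) :=
    fun u hu w hw huw => hmono u w hu.1 huw hw.2
  have hγv : ∀ n, γ * v n ∈ Icc 0 γ := fun n =>
    ⟨mul_nonneg hγ0.le (hv n),
      mul_le_of_le_one_right hγ0.le ((hsum.le_tsum n fun m _ => hv m).trans hle)⟩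
  have hsummable : Summable (fun n => h (γ * v n)) :=
    (hsum.mul_left (L * γ)).of_nonneg_of_le (fun n => (hbound _ (hγv n)).1)
      (fun n => (hbound _ (hγv n)).2.trans_eq (mul_assoc L γ (v n)).symm)
  refine ⟨hsummable, ?_⟩
  have hsub : h (γ * ∑' n, v n) ≤ ∑' n, h (γ * v n) := by
    rw [← tsum_mul_left]
    exact apply_tsum_le_tsum_of_antitoneOn_div hmono' (hbound 0 ⟨le_rfl, hγ0.le⟩).1
      (fun n => (hγv n).1) (hsum.mul_left γ) hsummable
      (by rw [tsum_mul_left]; exact mul_pos hγ0 hpos)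
      (by rw [tsum_mul_left]; exact mul_le_of_le_one_right hγ0.le hle)
  calc g (∑' n, v n) ≤ γ⁻¹ * h (γ * ∑' n, v n) :=
        le_inv_mul_apply_mul_of_antitoneOn_div hγ0 (by linarith [hγ.2]) hmono' hgh hslope
          hpos hle
    _ ≤ γ⁻¹ * ∑' n, h (γ * v n) := mul_le_mul_of_nonneg_left hsub (inv_nonneg.mpr hγ0.le)

/-- Key pointwise inequality used to show that `γ⁻¹ ∑ uₙ'` is a supersolution
(proof of Theorem 2.1 of "Virtual Linearity and Homogenization for KPP
Reaction-Diffusion Equations"). -/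
theorem stmt0
    (γ L : ℝ) (hγ : γ ∈ Set.Ioc (0 : ℝ) (1 / 2)) (hL : 0 ≤ L)
    (g h : ℝ → ℝ)
    (h0 : h 0 = 0)
    (hbound : ∀ u ∈ Set.Icc (0 : ℝ) γ, 0 ≤ h u ∧ h u ≤ L * u)
    (hmono : ∀ u v : ℝ, 0 < u → u ≤ v → v ≤ γ → h v / v ≤ h u / u)
    (hgh : ∀ u ∈ Set.Ioc (0 : ℝ) γ, g u ≤ h u)
    (hslope : ∀ u : ℝ, γ ≤ u → g u / u ≤ h γ / γ)
    (v : ℕ → ℝ) (hv : ∀ n, 0 ≤ v n) (hsum : Summable v)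
    (hpos : 0 < ∑' n, v n) (hle : (∑' n, v n) ≤ 1) :
    Summable (fun n => h (γ * v n)) ∧
      g (∑' n, v n) ≤ γ⁻¹ * ∑' n, h (γ * v n) :=
  stmt0_general γ L hγ g h hbound hmono hgh hslope v hv hsum hpos hle
end

section
/- Let γ ∈ (0,1/2], let ψ : (0,1) → [0,∞) be non-decreasing, and let g, h : [0,∞) → ℝ satisfy: the map u ↦ h(u)/u is non-increasing on (0,γ], h(u) ≤ g(u) + ψ(u)·u for all u ∈ (0,γ], and h(u)/u ≤ h(γ)/γ for all u ≥ γ. Then for every r ∈ (0,γ] and every u ∈ (0,1], one has r·h(u) ≤ g(r·u) + ψ(r)·r·u. -/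
/-!
Since `r ≤ γ` and `u ≤ 1`, the point `r * u` lies in `(0, γ]` below `u`, so the slope bound
`h u / u ≤ h (r * u) / (r * u)` holds (through `γ` when `u > γ`); multiplied by `r * u` it reads
`r * h u ≤ h (r * u)`. Comparing `h` with `g` at `r * u` and using `ψ (r * u) ≤ ψ r` concludes.
-/

lemma slope_le_slope_of_le {γ : ℝ} {h : ℝ → ℝ}
    (hanti : AntitoneOn (fun u => h u / u) (Set.Ioc 0 γ))
    (hslope : ∀ u : ℝ, γ ≤ u → h u / u ≤ h γ / γ)
    {v w : ℝ} (hv : v ∈ Set.Ioc 0 γ) (hvw : v ≤ w) :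
    h w / w ≤ h v / v := by
  have hγ : γ ∈ Set.Ioc 0 γ := ⟨hv.1.trans_le hv.2, le_rfl⟩
  rcases le_or_gt w γ with hwγ | hγw
  · exact hanti hv ⟨hv.1.trans_le hvw, hwγ⟩ hvw
  · exact (hslope w hγw.le).trans (hanti hv hγ hv.2)

lemma mul_le_of_slope_le {h : ℝ → ℝ} {r u : ℝ} (hr : 0 < r) (hu : 0 < u)
    (hslope : h u / u ≤ h (r * u) / (r * u)) :
    r * h u ≤ h (r * u) := by
  rw [div_le_div_iff₀ hu (mul_pos hr hu)] at hslope
  nlinarith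

theorem stmt1_general
    (γ : ℝ) (hγ : γ ∈ Set.Ioc (0 : ℝ) (1 / 2))
    (ψ : ℝ → ℝ)
    (hψmono : ∀ u v : ℝ, u ∈ Set.Ioo (0 : ℝ) 1 → v ∈ Set.Ioo (0 : ℝ) 1 → u ≤ v → ψ u ≤ ψ v)
    (g h : ℝ → ℝ)
    (hmono : ∀ u v : ℝ, 0 < u → u ≤ v → v ≤ γ → h v / v ≤ h u / u)
    (hhg : ∀ u ∈ Set.Ioc (0 : ℝ) γ, h u ≤ g u + ψ u * u)
    (hslope : ∀ u : ℝ, γ ≤ u → h u / u ≤ h γ / γ)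
    (r : ℝ) (hr : r ∈ Set.Ioc (0 : ℝ) γ) (u : ℝ) (hu : u ∈ Set.Ioc (0 : ℝ) 1) :
    r * h u ≤ g (r * u) + ψ r * r * u := by
  obtain ⟨hr0, hrγ⟩ := hr
  obtain ⟨hu0, hu1⟩ := hu
  have hru_le_r : r * u ≤ r := mul_le_of_le_one_right hr0.le hu1
  have hru_le_u : r * u ≤ u := mul_le_of_le_one_left hu0.le (by linarith [hγ.2])
  have hru : r * u ∈ Set.Ioc 0 γ := ⟨mul_pos hr0 hu0, hru_le_r.trans hrγ⟩
  have hr1 : r < 1 := by linarith [hγ.2]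
  have hanti : AntitoneOn (fun u => h u / u) (Set.Ioc 0 γ) :=
    fun a ha _ hb hab => hmono a _ ha.1 hab hb.2
  have hscale : r * h u ≤ h (r * u) :=
    mul_le_of_slope_le hr0 hu0 (slope_le_slope_of_le hanti hslope hru hru_le_u)
  have hψ : ψ (r * u) ≤ ψ r :=
    hψmono _ _ ⟨hru.1, hru_le_r.trans_lt hr1⟩ ⟨hr0, hr1⟩ hru_le_r
  calc r * h u ≤ g (r * u) + ψ (r * u) * (r * u) := hscale.trans (hhg _ hru)
    _ ≤ g (r * u) + ψ r * r * u := by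
      rw [← mul_assoc]; gcongr

/-- Pointwise reaction inequality used to show that `s·e^{-ψ(s)t}·uₙ'` is a
subsolution (proof of Theorem 2.1 of "Virtual Linearity and Homogenization for
KPP Reaction-Diffusion Equations"). -/
theorem stmt1
    (γ : ℝ) (hγ : γ ∈ Set.Ioc (0 : ℝ) (1 / 2))
    (ψ : ℝ → ℝ) (hψ0 : ∀ u ∈ Set.Ioo (0 : ℝ) 1, 0 ≤ ψ u)
    (hψmono : ∀ u v : ℝ, u ∈ Set.Ioo (0 : ℝ) 1 → v ∈ Set.Ioo (0 : ℝ) 1 → u ≤ v → ψ u ≤ ψ v)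
    (g h : ℝ → ℝ)
    (hmono : ∀ u v : ℝ, 0 < u → u ≤ v → v ≤ γ → h v / v ≤ h u / u)
    (hhg : ∀ u ∈ Set.Ioc (0 : ℝ) γ, h u ≤ g u + ψ u * u)
    (hslope : ∀ u : ℝ, γ ≤ u → h u / u ≤ h γ / γ)
    (r : ℝ) (hr : r ∈ Set.Ioc (0 : ℝ) γ) (u : ℝ) (hu : u ∈ Set.Ioc (0 : ℝ) 1) :
    r * h u ≤ g (r * u) + ψ r * r * u :=
  stmt1_general γ hγ ψ hψmono g h hmono hhg hslope r hr u hu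
end
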